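/- For $k \in \mathbb{N}$, define $\mathcal{S}^{(k)}:[0,1]\to\mathbb{R}^2$ by $\mathcal{S}^{(k)}(h) = (\cos(2\pi k h), \sin(2\pi k h))$, and let $\bar\mu = \mathcal{U}([0,1])$. Fix $L^\ast > 0$ and let $\Psi^{(k)} = \arg\min_{\mathrm{Lip}(\Psi)\le L^\ast}\mathbb{E}_{h\sim\bar\mu}|\Psi(h) - \mathcal{S}^{(k)}(h)|^2$. Then $\mathbb{E}_{h\sim\bar\mu}|\Psi^{(k)}(h)|^2 \le C/k$ for a constant $C$ depending only on $L^\ast$; in particular $\Psi^{(k)} \to 0$ in $L^2(\bar\mu)$ as $k \to \infty$. -/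

import Mathlib

open MeasureTheory Set Filter Real
open scoped NNReal Topology

/-- The circle-valued oscillatory map
`S^{(k)}(h) = (cos(2π k h), sin(2π k h)) ∈ ℝ²`. -/
noncomputable def Scirc (k : ℕ) (h : ℝ) : EuclideanSpace ℝ (Fin 2) :=
  (WithLp.equiv 2 (Fin 2 → ℝ)).symm ![Real.cos (2 * π * k * h), Real.sin (2 * π * k * h)]

lemma Scirc_apply0 (k : ℕ) (h : ℝ) : Scirc k h 0 = Real.cos (2 * π * k * h) := rfl
lemma Scirc_apply1 (k : ℕ) (h : ℝ) : Scirc k h 1 = Real.sin (2 * π * k * h) := rfl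

lemma Scirc_norm_sq (k : ℕ) (h : ℝ) : ‖Scirc k h‖ ^ 2 = 1 := by
  rw [← real_inner_self_eq_norm_sq]
  simp only [PiLp.inner_apply, RCLike.inner_apply, conj_trivial, Fin.sum_univ_two,
    Scirc_apply0, Scirc_apply1]
  nlinarith [Real.sin_sq_add_cos_sq (2 * π * k * h)]

lemma inner_Scirc (x : EuclideanSpace ℝ (Fin 2)) (k : ℕ) (h : ℝ) :
    (inner ℝ x (Scirc k h) : ℝ)
      = x 0 * Real.cos (2 * π * k * h) + x 1 * Real.sin (2 * π * k * h) := by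
  simp [PiLp.inner_apply, Fin.sum_univ_two, Scirc_apply0, Scirc_apply1]; ring

lemma abs_apply_le (v : EuclideanSpace ℝ (Fin 2)) (i : Fin 2) : |v i| ≤ ‖v‖ := by
  rw [EuclideanSpace.norm_eq]
  refine (Real.le_sqrt (abs_nonneg _) (by positivity)).mpr ?_
  rw [sq_abs]
  calc v i ^ 2 = ‖v i‖ ^ 2 := by rw [Real.norm_eq_abs, sq_abs]
  _ ≤ ∑ j, ‖v j‖ ^ 2 := Finset.single_le_sum (f := fun j => ‖v j‖ ^ 2)
      (fun j _ => by positivity) (Finset.mem_univ i)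

lemma comp_lip {L : ℝ≥0} {f : ℝ → EuclideanSpace ℝ (Fin 2)} (hf : LipschitzWith L f)
    (i : Fin 2) : LipschitzWith L (fun h => f h i) := by
  refine LipschitzWith.of_dist_le_mul fun x y => ?_
  calc dist (f x i) (f y i) = |(f x - f y) i| := by
        simp [Real.dist_eq, PiLp.sub_apply]
  _ ≤ ‖f x - f y‖ := abs_apply_le _ _
  _ = dist (f x) (f y) := (dist_eq_norm _ _).symm
  _ ≤ L * dist x y := hf.dist_le_mul x y

lemma osc_bound (g f : ℝ → ℝ) (L : ℝ≥0) (hg : LipschitzWith L g)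
    (hf : Continuous f) (hf1 : ∀ x, |f x| ≤ 1) (k : ℕ) (hk : 0 < k)
    (hzero : ∀ j : ℕ, (∫ x in ((j : ℝ)/k)..(((j : ℝ)+1)/k), f x) = 0) :
    (∫ x in (0:ℝ)..1, g x * f x) ≤ L / k := by
  have hk' : (0:ℝ) < k := Nat.cast_pos.mpr hk
  have hcont : Continuous fun x => g x * f x := (hg.continuous.mul hf)
  set a : ℕ → ℝ := fun j => (j : ℝ) / k with ha
  have hint : ∀ j, j < k → IntervalIntegrable (fun x => g x * f x) volume (a j) (a (j+1)) :=
    fun j _ => hcont.intervalIntegrable _ _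
  have hsum := intervalIntegral.sum_integral_adjacent_intervals (μ := volume) hint
  have ha0 : a 0 = 0 := by simp [ha]
  have hak : a k = 1 := by simp only [ha]; exact div_self hk'.ne'
  rw [ha0, hak] at hsum
  rw [← hsum]
  have key : ∀ j : ℕ, (∫ x in a j..a (j+1), g x * f x) ≤ L / k ^ 2 := by
    intro j
    have hz : (∫ x in a j..a (j+1), f x) = 0 := by
      have := hzero j
      simpa [ha, Nat.cast_add] using this
    have hdiff : a (j+1) - a j = 1 / k := by
      simp only [ha, Nat.cast_add, Nat.cast_one]
      field_simp
      ring
    have hab : a j ≤ a (j+1) := by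
      have : (0:ℝ) < 1 / k := by positivity
      linarith [hdiff]
    have hsplit : (∫ x in a j..a (j+1), g x * f x)
        = ∫ x in a j..a (j+1), (g x - g (a j)) * f x := by
      have h1 : (fun x => (g x - g (a j)) * f x)
          = fun x => g x * f x - g (a j) * f x := by ext x; ring
      rw [h1, intervalIntegral.integral_sub (hcont.intervalIntegrable _ _)
        ((by fun_prop : Continuous fun x => g (a j) * f x).intervalIntegrable _ _),
        intervalIntegral.integral_const_mul, hz, mul_zero, sub_zero]
    have hbound : ∀ x ∈ Set.uIoc (a j) (a (j+1)), ‖(g x - g (a j)) * f x‖ ≤ L * (1/k) := by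
      intro x hx
      rw [Set.uIoc_of_le hab] at hx
      have h1 : |g x - g (a j)| ≤ L * |x - a j| := by
        have := hg.dist_le_mul x (a j)
        simpa [Real.dist_eq] using this
      have h2 : |x - a j| ≤ 1 / k := by
        rw [abs_of_nonneg (by linarith [hx.1.le])]
        linarith [hx.2, hdiff]
      calc ‖(g x - g (a j)) * f x‖ = |g x - g (a j)| * |f x| := by
            rw [Real.norm_eq_abs, abs_mul]
      _ ≤ (L * (1/k)) * 1 := by
            apply mul_le_mul _ (hf1 x) (abs_nonneg _) (by positivity)
            exact h1.trans (by gcongr)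
      _ = L * (1/k) := mul_one _
    calc (∫ x in a j..a (j+1), g x * f x)
        ≤ ‖∫ x in a j..a (j+1), (g x - g (a j)) * f x‖ := by
          rw [hsplit]; exact le_abs_self _
    _ ≤ (L * (1/k)) * |a (j+1) - a j| :=
          intervalIntegral.norm_integral_le_of_norm_le_const hbound
    _ = L / k ^ 2 := by
          rw [hdiff, abs_of_nonneg (by positivity)]
          field_simp
  calc (∑ j ∈ Finset.range k, ∫ x in a j..a (j+1), g x * f x)
      ≤ ∑ j ∈ Finset.range k, (L : ℝ) / k ^ 2 := Finset.sum_le_sum fun j _ => key j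
  _ = k * ((L : ℝ) / k ^ 2) := by rw [Finset.sum_const, Finset.card_range]; ring
  _ = L / k := by field_simp

lemma cos_int_zero (k : ℕ) (hk : 0 < k) (j : ℕ) :
    (∫ x in ((j : ℝ)/k)..(((j : ℝ)+1)/k), Real.cos (2 * π * k * x)) = 0 := by
  have hk' : (0:ℝ) < k := Nat.cast_pos.mpr hk
  have hc : (2 * π * (k:ℝ)) ≠ 0 := by positivity
  have := intervalIntegral.integral_comp_mul_left (a := ((j:ℝ)/k)) (b := (((j:ℝ)+1)/k))
    (fun x => Real.cos x) hc
  simp only [mul_assoc] at this ⊢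
  rw [this, integral_cos]
  have e1 : 2 * (π * ((k:ℝ) * ((j:ℝ)/k))) = (j:ℝ) * (2 * π) := by field_simp
  have e2 : 2 * (π * ((k:ℝ) * (((j:ℝ)+1)/k))) = ((j+1 : ℕ):ℝ) * (2 * π) := by
    push_cast; field_simp
  rw [e1, e2]
  have s1 : Real.sin ((j:ℝ) * (2 * π)) = 0 := by
    have : ((j:ℝ)) * (2 * π) = ((2*j : ℕ) : ℝ) * π := by push_cast; ring
    rw [this, Real.sin_nat_mul_pi]
  have s2 : Real.sin (((j+1 : ℕ):ℝ) * (2 * π)) = 0 := by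
    have : (((j+1:ℕ)):ℝ) * (2 * π) = ((2*(j+1) : ℕ) : ℝ) * π := by push_cast; ring
    rw [this, Real.sin_nat_mul_pi]
  rw [s1, s2]; simp

lemma sin_int_zero (k : ℕ) (hk : 0 < k) (j : ℕ) :
    (∫ x in ((j : ℝ)/k)..(((j : ℝ)+1)/k), Real.sin (2 * π * k * x)) = 0 := by
  have hk' : (0:ℝ) < k := Nat.cast_pos.mpr hk
  have hc : (2 * π * (k:ℝ)) ≠ 0 := by positivity
  have := intervalIntegral.integral_comp_mul_left (a := ((j:ℝ)/k)) (b := (((j:ℝ)+1)/k))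
    (fun x => Real.sin x) hc
  simp only [mul_assoc] at this ⊢
  rw [this, integral_sin]
  have e1 : 2 * (π * ((k:ℝ) * ((j:ℝ)/k))) = (j:ℝ) * (2 * π) := by field_simp
  have e2 : 2 * (π * ((k:ℝ) * (((j:ℝ)+1)/k))) = ((j+1 : ℕ):ℝ) * (2 * π) := by
    push_cast; field_simp
  rw [e1, e2, Real.cos_nat_mul_two_pi, Real.cos_nat_mul_two_pi]
  simp

lemma Scirc_continuous (k : ℕ) : Continuous (Scirc k) := by
  have h1 : Continuous fun h : ℝ => ![Real.cos (2*π*k*h), Real.sin (2*π*k*h)] := by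
    apply continuous_pi; intro i
    fin_cases i <;> simp <;> fun_prop
  exact (PiLp.continuous_toLp 2 (fun _ : Fin 2 => ℝ)).comp h1


/-- Fix `L⋆ > 0`. There is a constant `C > 0` (depending
only on `L⋆`) such that, whenever `Ψ k` is an `L⋆`-Lipschitz minimizer of
`E_{h ~ U([0,1])} |Ψ(h) - S^{(k)}(h)|²` over `L⋆`-Lipschitz functions, one has
`E |Ψ^{(k)}|² ≤ C / k`; in particular `Ψ^{(k)} → 0` in `L²` as `k → ∞`. -/
theorem lipschitz_least_squares_circle_collapses
    (L : ℝ≥0) (hL : 0 < L) :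
    ∃ C > 0, ∀ Ψ : ℕ → ℝ → EuclideanSpace ℝ (Fin 2),
      (∀ k, LipschitzWith L (Ψ k)) →
      (∀ k : ℕ, ∀ Φ : ℝ → EuclideanSpace ℝ (Fin 2), LipschitzWith L Φ →
        (∫ h in Icc (0 : ℝ) 1, ‖Ψ k h - Scirc k h‖ ^ 2) ≤
          ∫ h in Icc (0 : ℝ) 1, ‖Φ h - Scirc k h‖ ^ 2) →
      (∀ k : ℕ, 1 ≤ k → (∫ h in Icc (0 : ℝ) 1, ‖Ψ k h‖ ^ 2) ≤ C / k) ∧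
        Tendsto (fun k : ℕ => ∫ h in Icc (0 : ℝ) 1, ‖Ψ k h‖ ^ 2) atTop (𝓝 0) := by
  refine ⟨4 * L, by positivity, fun Ψ hLip hmin => ?_⟩
  have hIcc : ∀ (F : ℝ → ℝ), (∫ h in Icc (0:ℝ) 1, F h) = ∫ h in (0:ℝ)..1, F h := by
    intro F
    rw [integral_Icc_eq_integral_Ioc, ← intervalIntegral.integral_of_le zero_le_one]
  have hnonneg : ∀ k : ℕ, 0 ≤ ∫ h in Icc (0:ℝ) 1, ‖Ψ k h‖ ^ 2 := fun k =>
    integral_nonneg fun h => by positivity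
  have key : ∀ k : ℕ, 1 ≤ k → (∫ h in Icc (0:ℝ) 1, ‖Ψ k h‖ ^ 2) ≤ 4 * L / k := by
    intro k hk
    have hk' : (0:ℝ) < k := by exact_mod_cast hk
    have cΨ : Continuous (Ψ k) := (hLip k).continuous
    have cS : Continuous (Scirc k) := Scirc_continuous k
    have cN : Continuous fun h => ‖Ψ k h‖ ^ 2 := by fun_prop
    have cI : Continuous fun h => (inner ℝ (Ψ k h) (Scirc k h) : ℝ) := cΨ.inner cS
    -- optimality against Φ = 0
    have hopt := hmin k (fun _ => 0) ((LipschitzWith.const' 0).weaken hL.le)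
    have hrhs : (∫ h in Icc (0:ℝ) 1, ‖(fun _ : ℝ => (0 : EuclideanSpace ℝ (Fin 2))) h - Scirc k h‖ ^ 2) = 1 := by
      simp only [zero_sub, norm_neg, Scirc_norm_sq]
      simp [Real.volume_Icc]
    rw [hrhs] at hopt
    -- expand the square
    have hexp : (∫ h in Icc (0:ℝ) 1, ‖Ψ k h - Scirc k h‖ ^ 2)
        = (∫ h in Icc (0:ℝ) 1, ‖Ψ k h‖ ^ 2)
          - 2 * (∫ h in (0:ℝ)..1, (inner ℝ (Ψ k h) (Scirc k h) : ℝ)) + 1 := by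
      rw [hIcc, hIcc]
      have : ∀ h : ℝ, ‖Ψ k h - Scirc k h‖ ^ 2
          = ‖Ψ k h‖ ^ 2 - 2 * (inner ℝ (Ψ k h) (Scirc k h) : ℝ) + 1 := by
        intro h
        rw [norm_sub_sq_real, Scirc_norm_sq]
      simp only [this]
      rw [intervalIntegral.integral_add ((by fun_prop : Continuous fun h => ‖Ψ k h‖ ^ 2 - 2 * (inner ℝ (Ψ k h) (Scirc k h) : ℝ)).intervalIntegrable _ _)
            (intervalIntegrable_const),
          intervalIntegral.integral_sub (cN.intervalIntegrable _ _)
            ((by fun_prop : Continuous fun h => 2 * (inner ℝ (Ψ k h) (Scirc k h) : ℝ)).intervalIntegrable _ _),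
          intervalIntegral.integral_const_mul, intervalIntegral.integral_const]
      simp only [smul_eq_mul]; ring
    -- oscillation bound on the inner product integral
    have hinner : (∫ h in (0:ℝ)..1, (inner ℝ (Ψ k h) (Scirc k h) : ℝ)) ≤ 2 * L / k := by
      have hrw : (fun h => (inner ℝ (Ψ k h) (Scirc k h) : ℝ))
          = fun h => Ψ k h 0 * Real.cos (2*π*k*h) + Ψ k h 1 * Real.sin (2*π*k*h) := by
        funext h; exact inner_Scirc _ _ _
      rw [hrw]
      have c0 : Continuous fun h => Ψ k h 0 * Real.cos (2*π*k*h) := by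
        exact ((comp_lip (hLip k) 0).continuous).mul (by fun_prop)
      have c1 : Continuous fun h => Ψ k h 1 * Real.sin (2*π*k*h) := by
        exact ((comp_lip (hLip k) 1).continuous).mul (by fun_prop)
      rw [intervalIntegral.integral_add (c0.intervalIntegrable _ _) (c1.intervalIntegrable _ _)]
      have b0 : (∫ h in (0:ℝ)..1, Ψ k h 0 * Real.cos (2*π*k*h)) ≤ L / k :=
        osc_bound _ _ L (comp_lip (hLip k) 0) (by fun_prop)
          (fun x => Real.abs_cos_le_one _) k (by omega) (cos_int_zero k (by omega))
      have b1 : (∫ h in (0:ℝ)..1, Ψ k h 1 * Real.sin (2*π*k*h)) ≤ L / k :=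
        osc_bound _ _ L (comp_lip (hLip k) 1) (by fun_prop)
          (fun x => Real.abs_sin_le_one _) k (by omega) (sin_int_zero k (by omega))
      calc _ ≤ (L:ℝ)/k + (L:ℝ)/k := add_le_add b0 b1
      _ = 2 * L / k := by ring
    rw [hexp] at hopt
    have : (∫ h in Icc (0:ℝ) 1, ‖Ψ k h‖ ^ 2)
        ≤ 2 * (∫ h in (0:ℝ)..1, (inner ℝ (Ψ k h) (Scirc k h) : ℝ)) := by linarith
    calc (∫ h in Icc (0:ℝ) 1, ‖Ψ k h‖ ^ 2) ≤ 2 * (2 * L / k) := by linarith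
    _ = 4 * L / k := by ring
  refine ⟨key, ?_⟩
  apply squeeze_zero' (Eventually.of_forall hnonneg)
    (eventually_atTop.mpr ⟨1, fun k hk => key k hk⟩)
  exact tendsto_const_div_atTop_nhds_zero_nat _
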